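/- arXiv:math/0401137 — 2 statements merged into one kernel-verified Lean document; each statement's English description precedes it below -/
import Mathlib

section
/- Let h ≠ 0 be a complex number, y(x) a monic polynomial with simple roots t_1,…,t_l, none of which differ by h, and Q(x) a polynomial having no common roots with y(x) and y(x+h). Then there exists a rational function g(x) with poles only at roots of y, each simple, such that g(x) - g(x+h) = Q(x)/(y(x) y(x+h)) if and only if the Bethe-ansatz-type condition Q(t_j)/Q(t_j - h) · ∏_{k≠j} (t_j - t_k - h)/(t_j - t_k + h) = 1 holds for each j = 1,…,l. -/
open Polynomial Finset


private lemma diff_surj' (h : ℂ) (hh : h ≠ 0) (M : Polynomial ℂ) :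
    ∃ s : Polynomial ℂ, s - s.comp (X + C h) = M := by
  suffices H : ∀ n : ℕ, ∀ M : Polynomial ℂ, M.natDegree ≤ n →
      ∃ s : Polynomial ℂ, s - s.comp (X + C h) = M from H M.natDegree M le_rfl
  intro n
  induction n with
  | zero =>
    intro M hM
    obtain ⟨c, rfl⟩ : ∃ c, M = C c := ⟨M.coeff 0, eq_C_of_natDegree_le_zero hM⟩
    refine ⟨C (-c / h) * X, ?_⟩
    rw [mul_comp, C_comp, X_comp]
    have : C (-c / h) * X - C (-c / h) * (X + C h)
        = C ((-c / h) * (-h)) := by rw [C_mul, C_neg]; ring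
    rw [this]
    congr 1
    field_simp
  | succ n ih =>
    intro M hM
    by_cases h0 : M.natDegree ≤ n
    · exact ih M h0
    have hd : M.natDegree = n + 1 := le_antisymm hM (not_le.mp h0)
    have hden : ((n : ℂ) + 2) * h ≠ 0 := by
      apply mul_ne_zero _ hh
      intro hc
      have := congrArg Complex.re hc
      simp [Complex.add_re] at this
      nlinarith [this]
    set a : ℂ := M.leadingCoeff / (-(((n : ℂ) + 2) * h)) with ha
    set P : Polynomial ℂ := X ^ (n + 2) - (X + C h) ^ (n + 2) with hP
    have hcoeffP : ∀ k : ℕ, P.coeff k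
        = (if k = n + 2 then 1 else 0) - h ^ (n + 2 - k) * ((n + 2).choose k : ℂ) := by
      intro k
      rw [hP, coeff_sub, coeff_X_pow, coeff_X_add_C_pow]
    have hNle : (M - C a * P).natDegree ≤ n := by
      rw [Polynomial.natDegree_le_iff_coeff_eq_zero]
      intro k hk
      rw [coeff_sub, coeff_C_mul, hcoeffP k]
      rcases eq_or_lt_of_le (Nat.succ_le_of_lt hk) with hk1 | hk1
      · -- k = n + 1
        subst hk1
        have hMk : M.coeff (n + 1) = M.leadingCoeff := by
          rw [Polynomial.leadingCoeff, hd]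
        have hne : n + 1 ≠ n + 2 := by omega
        have hch : ((n + 2).choose (n + 1) : ℂ) = (n : ℂ) + 2 := by
          rw [Nat.choose_succ_self_right]
          push_cast; ring
        have hsub : n + 2 - (n + 1) = 1 := by omega
        rw [Nat.succ_eq_add_one, hMk] at *
        simp only [hne, if_false, hsub, hch, pow_one, ha]
        field_simp
        have h2 : (2 + (n:ℂ)) ≠ 0 := by rw [add_comm]; exact left_ne_zero_of_mul hden
        linear_combination (-(M.leadingCoeff * h)) * mul_inv_cancel₀ h2
      · -- k ≥ n + 2
        have hMk : M.coeff k = 0 :=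
          Polynomial.coeff_eq_zero_of_natDegree_lt (by omega)
        rw [hMk]
        rcases eq_or_lt_of_le (show n + 2 ≤ k by omega) with hk2 | hk2
        · subst hk2
          simp
        · have : k ≠ n + 2 := by omega
          simp only [this, if_false]
          rw [Nat.choose_eq_zero_of_lt hk2]
          simp
    obtain ⟨s₂, hs₂⟩ := ih _ hNle
    refine ⟨C a * X ^ (n + 2) + s₂, ?_⟩
    rw [add_comp, mul_comp, C_comp, pow_comp, X_comp]
    linear_combination hs₂

/-- for `y(x) = ∏ (x - t_j)` with distinct roots, no two roots
differing by `h`, and `Q` nonvanishing at the `t_j` and `t_j - h`, a rational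
function `g` with only simple poles at roots of `y` (i.e. `g = p/y`) solving
`g(x) - g(x+h) = Q(x)/(y(x)y(x+h))` exists iff the Bethe-ansatz-type equations
`Q(t_j)/Q(t_j - h) · ∏_{k≠j} (t_j - t_k - h)/(t_j - t_k + h) = 1` hold. -/
theorem stmt_1 (h : ℂ) (hh : h ≠ 0) (l : ℕ) (t : Fin l → ℂ)
    (hdist : Function.Injective t)
    (hdiff : ∀ j k : Fin l, t j - t k ≠ h)
    (y : Polynomial ℂ) (hy : y = ∏ j : Fin l, (X - C (t j)))
    (Q : Polynomial ℂ)
    (hQ1 : ∀ j : Fin l, Q.eval (t j) ≠ 0)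
    (hQ2 : ∀ j : Fin l, Q.eval (t j - h) ≠ 0) :
    (∃ p : Polynomial ℂ,
        ∀ x : ℂ, y.eval x ≠ 0 → y.eval (x + h) ≠ 0 →
          p.eval x / y.eval x - p.eval (x + h) / y.eval (x + h)
            = Q.eval x / (y.eval x * y.eval (x + h)))
      ↔
    (∀ j : Fin l,
        Q.eval (t j) / Q.eval (t j - h) *
          ∏ k ∈ Finset.univ.erase j, ((t j - t k - h) / (t j - t k + h)) = 1) := by
  -- notation and basic facts
  set yt : Polynomial ℂ := y.comp (X + C h) with hytdef
  have hcomp : yt = ∏ j : Fin l, (X - C (t j - h)) := by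
    rw [hytdef, hy, Polynomial.prod_comp]
    refine Finset.prod_congr rfl fun j _ => ?_
    rw [sub_comp, X_comp, C_comp, C_sub]; ring
  have hevalcomp : ∀ x : ℂ, yt.eval x = y.eval (x + h) := by
    intro x; rw [hytdef, eval_comp]; simp
  have hy0 : ∀ j : Fin l, y.eval (t j) = 0 := by
    intro j; rw [hy, eval_prod]
    exact Finset.prod_eq_zero (mem_univ j) (by simp)
  have hyp : ∀ j : Fin l, y.eval (t j + h)
      = h * ∏ k ∈ Finset.univ.erase j, (t j - t k + h) := by
    intro j
    rw [hy, eval_prod]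
    simp only [eval_sub, eval_X, eval_C]
    rw [← Finset.mul_prod_erase Finset.univ _ (mem_univ j)]
    congr 1
    · ring
    · exact Finset.prod_congr rfl fun k _ => by ring
  have hym : ∀ j : Fin l, y.eval (t j - h)
      = -h * ∏ k ∈ Finset.univ.erase j, (t j - t k - h) := by
    intro j
    rw [hy, eval_prod]
    simp only [eval_sub, eval_X, eval_C]
    rw [← Finset.mul_prod_erase Finset.univ _ (mem_univ j)]
    congr 1
    · ring
    · exact Finset.prod_congr rfl fun k _ => by ring
  have hbne : ∀ j k : Fin l, t j - t k + h ≠ 0 := by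
    intro j k hc
    exact hdiff k j (by linear_combination -hc)
  have hane : ∀ j k : Fin l, t j - t k - h ≠ 0 := by
    intro j k hc
    exact hdiff j k (by linear_combination hc)
  have hypne : ∀ j : Fin l, y.eval (t j + h) ≠ 0 := by
    intro j
    rw [hyp j]
    exact mul_ne_zero hh (Finset.prod_ne_zero_iff.mpr fun k _ => hbne j k)
  have hymne : ∀ j : Fin l, y.eval (t j - h) ≠ 0 := by
    intro j
    rw [hym j]
    exact mul_ne_zero (neg_ne_zero.mpr hh) (Finset.prod_ne_zero_iff.mpr fun k _ => hane j k)
  have hyne : y ≠ 0 := by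
    rw [hy]
    exact (monic_prod_of_monic _ _ fun j _ => monic_X_sub_C (t j)).ne_zero
  have hytne : yt ≠ 0 := by
    rw [hcomp]
    exact (monic_prod_of_monic _ _ fun j _ => monic_X_sub_C (t j - h)).ne_zero
  -- the Bethe condition, polynomial-eval form
  have hB : ∀ j : Fin l,
      (Q.eval (t j) / Q.eval (t j - h) *
        ∏ k ∈ Finset.univ.erase j, ((t j - t k - h) / (t j - t k + h)) = 1)
      ↔ Q.eval (t j) * y.eval (t j - h) + Q.eval (t j - h) * y.eval (t j + h) = 0 := by
    intro j
    rw [Finset.prod_div_distrib, hyp j, hym j]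
    set A := ∏ k ∈ Finset.univ.erase j, (t j - t k - h) with hA
    set B := ∏ k ∈ Finset.univ.erase j, (t j - t k + h) with hBdef
    have hAne : A ≠ 0 := Finset.prod_ne_zero_iff.mpr fun k _ => hane j k
    have hBne : B ≠ 0 := Finset.prod_ne_zero_iff.mpr fun k _ => hbne j k
    rw [div_mul_div_comm, div_eq_one_iff_eq (mul_ne_zero (hQ2 j) hBne)]
    constructor
    · intro hEq; linear_combination (-h) * hEq
    · intro hEq
      refine mul_left_cancel₀ (neg_ne_zero.mpr hh) ?_
      linear_combination hEq
  -- equivalence with polynomial identity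
  have key : (∃ p : Polynomial ℂ,
        ∀ x : ℂ, y.eval x ≠ 0 → y.eval (x + h) ≠ 0 →
          p.eval x / y.eval x - p.eval (x + h) / y.eval (x + h)
            = Q.eval x / (y.eval x * y.eval (x + h)))
      ↔ (∃ p : Polynomial ℂ, p * yt - p.comp (X + C h) * y = Q) := by
    constructor
    · rintro ⟨p, hp⟩
      refine ⟨p, ?_⟩
      rw [← sub_eq_zero]
      apply Polynomial.eq_zero_of_infinite_isRoot
      have hfin : ({x : ℂ | y.eval x = 0} ∪ {x : ℂ | y.eval (x + h) = 0}).Finite := by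
        apply Set.Finite.union
        · exact Polynomial.finite_setOf_isRoot hyne
        · have : {x : ℂ | y.eval (x + h) = 0} = {x : ℂ | IsRoot yt x} := by
            ext x; simp [IsRoot, hevalcomp]
          rw [this]
          exact Polynomial.finite_setOf_isRoot hytne
      apply Set.Infinite.mono (s := Set.univ \ ({x : ℂ | y.eval x = 0} ∪ {x : ℂ | y.eval (x + h) = 0}))
      · intro x hx
        simp only [Set.mem_diff, Set.mem_union, Set.mem_setOf_eq, not_or] at hx
        obtain ⟨-, hx1, hx2⟩ := hx
        have := hp x hx1 hx2
        simp only [Set.mem_setOf_eq, IsRoot, eval_sub, eval_mul, eval_comp, eval_add, eval_X,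
          eval_C, hevalcomp]
        field_simp at this
        linear_combination this
      · exact Set.Infinite.diff Set.infinite_univ hfin
    · rintro ⟨p, hp⟩
      refine ⟨p, fun x hx1 hx2 => ?_⟩
      have := congrArg (Polynomial.eval x) hp
      simp only [eval_sub, eval_mul, eval_comp, eval_add, eval_X, eval_C, hevalcomp] at this
      field_simp
      linear_combination this
  rw [key]
  constructor
  · rintro ⟨p, hp⟩ j
    rw [hB j]
    have e1 := congrArg (Polynomial.eval (t j)) hp
    have e2 := congrArg (Polynomial.eval (t j - h)) hp
    simp only [eval_sub, eval_mul, eval_comp, eval_add, eval_X, eval_C, hevalcomp,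
      sub_add_cancel, hy0 j] at e1 e2
    linear_combination (- y.eval (t j - h)) * e1 - y.eval (t j + h) * e2
  · intro hBethe
    -- construction
    have hBethe' : ∀ j : Fin l,
        Q.eval (t j) * y.eval (t j - h) + Q.eval (t j - h) * y.eval (t j + h) = 0 :=
      fun j => (hB j).mp (hBethe j)
    set c : Fin l → ℂ := fun j => Q.eval (t j) / y.eval (t j + h) with hc
    set L : Polynomial ℂ := Lagrange.interpolate Finset.univ t c with hLdef
    have hinjOn : Set.InjOn t ↑(Finset.univ : Finset (Fin l)) := hdist.injOn
    have hL : ∀ j : Fin l, L.eval (t j) = c j := fun j =>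
      Lagrange.eval_interpolate_at_node c hinjOn (mem_univ j)
    set R : Polynomial ℂ := L * yt - L.comp (X + C h) * y - Q with hRdef
    have hroot1 : ∀ j : Fin l, R.eval (t j) = 0 := by
      intro j
      simp only [hRdef, eval_sub, eval_mul, hevalcomp, eval_comp, eval_add, eval_X, eval_C,
        hy0 j, mul_zero, hL j, hc]
      field_simp [hypne j]
      ring
    have hroot2 : ∀ j : Fin l, R.eval (t j - h) = 0 := by
      intro j
      have : (t j - h) + h = t j := by ring
      simp only [hRdef, eval_sub, eval_mul, hevalcomp, eval_comp, eval_add, eval_X, eval_C, this,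
        hy0 j, mul_zero, hL j, hc]
      have hv := hBethe' j
      field_simp [hypne j]
      linear_combination -hv
    -- divisibility
    set u : Fin l ⊕ Fin l → ℂ := Sum.elim t (fun j => t j - h) with hu
    have huinj : Function.Injective u := by
      rintro (j | j) (k | k) hjk <;> simp only [hu, Sum.elim_inl, Sum.elim_inr] at hjk
      · exact congrArg Sum.inl (hdist hjk)
      · exact absurd (by linear_combination -hjk) (hdiff k j)
      · exact absurd (by linear_combination hjk) (hdiff j k)
      · exact congrArg Sum.inr (hdist (by linear_combination hjk))
    have hdvd : (∏ s : Fin l ⊕ Fin l, (X - C (u s))) ∣ R := by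
      apply Fintype.prod_dvd_of_coprime (Polynomial.pairwise_coprime_X_sub_C huinj)
      rintro (j | j)
      · exact dvd_iff_isRoot.mpr (hroot1 j)
      · exact dvd_iff_isRoot.mpr (hroot2 j)
    have hprodeq : (∏ s : Fin l ⊕ Fin l, (X - C (u s))) = y * yt := by
      rw [Fintype.prod_sum_type]
      simp only [hu, Sum.elim_inl, Sum.elim_inr]
      rw [← hy, ← hcomp]
    rw [hprodeq] at hdvd
    obtain ⟨Mq, hMq⟩ := hdvd
    obtain ⟨s, hs⟩ := diff_surj' h hh Mq
    refine ⟨L - s * y, ?_⟩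
    rw [sub_comp, mul_comp]
    have hsy : s.comp (X + C h) * y.comp (X + C h) = s.comp (X + C h) * yt := by rw [hytdef]
    rw [hsy]
    have hR : L * yt - L.comp (X + C h) * y - Q = y * yt * Mq := hMq ▸ hRdef ▸ rfl
    linear_combination hR - y * yt * hs
end

section
/- Fix h ≠ 0 and polynomials y, Q with y monic of degree l. The set of polynomial solutions ỹ of the discrete Wronskian equation y(x+h)ỹ(x) - y(x)ỹ(x+h) = Q(x) is either empty or an affine line {ỹ₀ + c·y : c ∈ ℂ} for any particular solution ỹ₀: i.e., the difference of any two polynomial solutions is a constant multiple of y. -/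
open Polynomial

private lemma delta_spec (h : ℂ) (hh : h ≠ 0) (f : Polynomial ℂ) (hf : f ≠ 0)
    (hk : 1 ≤ f.natDegree) :
    (taylor h f - f) ≠ 0 ∧ (taylor h f - f).natDegree = f.natDegree - 1 ∧
      (taylor h f - f).leadingCoeff = (f.natDegree : ℂ) * h * f.leadingCoeff := by
  set k := f.natDegree with hkdef
  -- coefficient at k-1
  have hcoeff : (taylor h f - f).coeff (k - 1) = (k : ℂ) * h * f.leadingCoeff := by
    rw [coeff_sub, taylor_coeff]
    have hdeg : (hasseDeriv (k - 1) f).natDegree < 2 := by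
      have := natDegree_hasseDeriv_le f (k - 1)
      omega
    rw [eval_eq_sum_range' hdeg]
    rw [Finset.sum_range_succ, Finset.sum_range_succ, Finset.sum_range_zero]
    rw [hasseDeriv_coeff, hasseDeriv_coeff]
    have h1 : 0 + (k - 1) = k - 1 := by omega
    have h2 : 1 + (k - 1) = k := by omega
    rw [h1, h2, Nat.choose_self]
    have h3 : k.choose (k - 1) = k := by
      have := Nat.choose_symm (n := k) (k := 1) hk
      simpa [Nat.choose_one_right] using this
    rw [h3, leadingCoeff]
    push_cast
    ring
  -- coefficient at k of the difference is zero
  have hcoeffk : (taylor h f - f).coeff k = 0 := by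
    rw [coeff_sub, taylor_coeff]
    have hdeg0 : (hasseDeriv k f).natDegree < 1 := by
      have := natDegree_hasseDeriv_le f k
      omega
    rw [eval_eq_sum_range' hdeg0, Finset.sum_range_succ, Finset.sum_range_zero,
      hasseDeriv_coeff]
    simp
  -- degree bound
  have hle : (taylor h f - f).natDegree ≤ k - 1 := by
    rw [natDegree_le_iff_coeff_eq_zero]
    intro m hm
    rcases eq_or_lt_of_le (Nat.succ_le_of_lt hm) with heq | hlt
    · have : m = k := by omega
      rw [this]; exact hcoeffk
    · rw [coeff_sub]
      have hmk : k < m := by omega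
      rw [coeff_eq_zero_of_natDegree_lt (by simpa using hmk),
        coeff_eq_zero_of_natDegree_lt hmk]
      ring
  have hlc : f.leadingCoeff ≠ 0 := leadingCoeff_ne_zero.mpr hf
  have hcne : (taylor h f - f).coeff (k - 1) ≠ 0 := by
    rw [hcoeff]
    have : (k : ℂ) ≠ 0 := Nat.cast_ne_zero.mpr (by omega)
    exact mul_ne_zero (mul_ne_zero this hh) hlc
  have hne : (taylor h f - f) ≠ 0 := fun h0 => hcne (by simp [h0])
  have hdeq : (taylor h f - f).natDegree = k - 1 :=
    le_antisymm hle (le_natDegree_of_ne_zero hcne)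
  exact ⟨hne, hdeq, by rw [leadingCoeff, hdeq]; exact hcoeff⟩

private lemma aux_deg (h : ℂ) (hh : h ≠ 0) (y p : Polynomial ℂ) (hy : y.Monic)
    (hp : p ≠ 0) (heq : taylor h y * p = y * taylor h p) :
    p.natDegree = y.natDegree := by
  have hy0 : y ≠ 0 := hy.ne_zero
  have key : (taylor h y - y) * p = y * (taylor h p - p) := by ring_nf; linear_combination heq
  by_cases hm : 1 ≤ y.natDegree
  · obtain ⟨hyne, hydeg, hylc⟩ := delta_spec h hh y hy0 hm
    by_cases hk : 1 ≤ p.natDegree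
    · obtain ⟨hpne, hpdeg, hplc⟩ := delta_spec h hh p hp hk
      have hlc := congrArg leadingCoeff key
      rw [leadingCoeff_mul, leadingCoeff_mul, hylc, hplc, hy.leadingCoeff] at hlc
      have hplcne : p.leadingCoeff ≠ 0 := leadingCoeff_ne_zero.mpr hp
      have h5 : (y.natDegree : ℂ) * (h * p.leadingCoeff)
          = (p.natDegree : ℂ) * (h * p.leadingCoeff) := by linear_combination hlc
      have := mul_right_cancel₀ (mul_ne_zero hh hplcne) h5
      exact_mod_cast this.symm
    · -- p constant, so taylor h p = p, so (taylor h y - y) * p = 0, contradiction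
      have hk0 : p.natDegree = 0 := by omega
      obtain ⟨a, ha⟩ := natDegree_eq_zero.mp hk0
      have htp : taylor h p = p := by rw [← ha, taylor_C]
      rw [htp, sub_self, mul_zero] at key
      exact absurd (mul_eq_zero.mp key) (by push_neg; exact ⟨hyne, hp⟩)
  · -- y has degree 0, monic, so y = 1
    have hm0 : y.natDegree = 0 := by omega
    have hy1 : y = 1 := hy.natDegree_eq_zero.mp hm0
    rw [hy1, taylor_one] at key
    simp only [map_one, C_1, sub_self, zero_mul, one_mul] at key
    by_cases hk : 1 ≤ p.natDegree
    · obtain ⟨hpne, _, _⟩ := delta_spec h hh p hp hk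
      exact absurd key.symm hpne
    · omega
  
private lemma key_lemma (h : ℂ) (hh : h ≠ 0) (y p : Polynomial ℂ) (hy : y.Monic)
    (heq : taylor h y * p = y * taylor h p) : ∃ c : ℂ, p = C c * y := by
  by_cases hp : p = 0
  · exact ⟨0, by simp [hp]⟩
  have hdeg := aux_deg h hh y p hy hp heq
  set a := p.leadingCoeff with hadef
  have ha : a ≠ 0 := leadingCoeff_ne_zero.mpr hp
  set q := p - C a * y with hqdef
  have heq' : taylor h y * q = y * taylor h q := by
    have : taylor h q = taylor h p - C a * taylor h y := by
      rw [hqdef, map_sub, taylor_mul, taylor_C]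
    rw [this, hqdef]
    ring_nf
    linear_combination heq
  by_cases hq : q = 0
  · exact ⟨a, by rw [← sub_eq_zero]; exact hq⟩
  · exfalso
    have hqdeg := aux_deg h hh y q hy hq heq'
    -- but q has degree < p's degree = y's degree
    have hcay : C a * y ≠ 0 := mul_ne_zero (by simpa using ha) hy.ne_zero
    have hdegeq : p.degree = (C a * y).degree := by
      rw [degree_eq_natDegree hp, degree_eq_natDegree hcay]
      congr 1
      rw [natDegree_C_mul ha, hdeg]
    have hlceq : p.leadingCoeff = (C a * y).leadingCoeff := by
      rw [leadingCoeff_mul, leadingCoeff_C, hy.leadingCoeff, mul_one]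
    have := degree_sub_lt hdegeq hp hlceq
    rw [← hqdef] at this
    have hlt : q.natDegree < p.natDegree := natDegree_lt_natDegree hq this
    omega

/-- the set of polynomial solutions of the discrete Wronskian
equation `y(x+h)ỹ(x) - y(x)ỹ(x+h) = Q(x)` is empty or an affine line:
any two solutions differ by a constant multiple of `y`. -/
theorem stmt_16 (h : ℂ) (hh : h ≠ 0) (y Q : Polynomial ℂ) (l : ℕ)
    (hmonic : y.Monic) (hdeg : y.natDegree = l)
    (ytil₁ ytil₂ : Polynomial ℂ)
    (h1 : y.comp (X + C h) * ytil₁ - y * ytil₁.comp (X + C h) = Q)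
    (h2 : y.comp (X + C h) * ytil₂ - y * ytil₂.comp (X + C h) = Q) :
    ∃ c : ℂ, ytil₂ = ytil₁ + C c * y := by
  set p := ytil₂ - ytil₁ with hpdef
  have heq : taylor h y * p = y * taylor h p := by
    rw [taylor_apply, taylor_apply, hpdef, sub_comp]
    ring_nf
    linear_combination h2 - h1
  obtain ⟨c, hc⟩ := key_lemma h hh y p hmonic heq
  exact ⟨c, by rw [← sub_eq_iff_eq_add']; linear_combination hc⟩
end
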